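/- For a permutation σ of {1,...,k} satisfying σ(i) ≤ i+1 for all i, the signature of σ equals (-1)^N where N is the number of indices i with σ(i) = i+1. -/

import Mathlib

/-!
Write `σ = decomposeFin.symm (p, τ)`, i.e. `σ = swap 0 p * τ'` with `p = σ 0` and `τ'` the
permutation fixing `0` that acts as `τ` on the shifted indices. The hypothesis forces `p ∈ {0, 1}`,
and then `τ` inherits the hypothesis and `i` is non-standard for `τ` iff `i + 1` is for `σ`.
So the transposition contributes a sign `-1` exactly when `0` is non-standard, and induction on
the size finishes.
-/

open Equiv Finset

namespace Equiv.Perm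

variable {n : ℕ}

def nonstandardIndices (σ : Perm (Fin n)) : Finset (Fin n) := {i | (σ i : ℕ) = i + 1}

theorem swap_zero_apply_succ_eq_or {p : Fin (n + 1)} (hp : (p : ℕ) ≤ 1) (y : Fin n) :
    swap 0 p y.succ = y.succ ∨ (y : ℕ) = 0 ∧ swap 0 p y.succ = 0 := by
  rcases Nat.le_one_iff_eq_zero_or_eq_one.mp hp with hp | hp
  · left
    rw [show p = 0 from Fin.ext hp, swap_self, refl_apply]
  · by_cases hy : (y : ℕ) = 0
    · right
      refine ⟨hy, ?_⟩
      rw [show y.succ = p from Fin.ext (by simp [hy, hp]), swap_apply_right]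
    · left
      refine swap_apply_of_ne_of_ne (Fin.succ_ne_zero y) fun h => hy ?_
      simpa [hp] using congrArg Fin.val h

variable {p : Fin (n + 1)} {τ : Perm (Fin n)}

theorem le_of_decomposeFin_symm_le (hp : (p : ℕ) ≤ 1)
    (hσ : ∀ i, (decomposeFin.symm (p, τ) i : ℕ) ≤ i + 1) (x : Fin n) :
    (τ x : ℕ) ≤ x + 1 := by
  have hx := hσ x.succ
  rw [decomposeFin_symm_apply_succ] at hx
  rcases swap_zero_apply_succ_eq_or hp (τ x) with h | ⟨h, -⟩
  · simp only [h, Fin.val_succ] at hx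
    omega
  · omega

theorem decomposeFin_symm_apply_succ_eq_iff (hp : (p : ℕ) ≤ 1) (x : Fin n) :
    (decomposeFin.symm (p, τ) x.succ : ℕ) = x.succ + 1 ↔ (τ x : ℕ) = x + 1 := by
  rw [decomposeFin_symm_apply_succ]
  rcases swap_zero_apply_succ_eq_or hp (τ x) with h | ⟨hτx, h⟩
  · simp [h]
  · simp only [h, Fin.val_zero, Fin.val_succ]
    omega

theorem card_nonstandardIndices_decomposeFin_symm (hp : (p : ℕ) ≤ 1) :
    #(nonstandardIndices (decomposeFin.symm (p, τ))) = #(nonstandardIndices τ) + p := by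
  simp only [nonstandardIndices, card_filter, Fin.sum_univ_succ, decomposeFin_symm_apply_zero,
    decomposeFin_symm_apply_succ_eq_iff hp, Fin.val_zero, zero_add]
  split_ifs <;> omega

theorem sign_eq_neg_one_pow_card_nonstandardIndices :
    ∀ {n : ℕ} (σ : Perm (Fin n)), (∀ i, (σ i : ℕ) ≤ i + 1) →
      sign σ = (-1) ^ #(nonstandardIndices σ)
  | 0, σ, _ => by simp [Subsingleton.elim σ 1, nonstandardIndices]
  | n + 1, σ, hσ => by
    obtain ⟨⟨p, τ⟩, rfl⟩ := decomposeFin.symm.surjective σ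
    have hp : (p : ℕ) ≤ 1 := by simpa using hσ 0
    rw [decomposeFin.symm_sign, card_nonstandardIndices_decomposeFin_symm hp, pow_add,
      sign_eq_neg_one_pow_card_nonstandardIndices τ (le_of_decomposeFin_symm_le hp hσ), mul_comm]
    rcases Nat.le_one_iff_eq_zero_or_eq_one.mp hp with hp | hp
    · simp [show p = 0 from Fin.ext hp]
    · simp [hp, Fin.ext_iff]

end Equiv.Perm

theorem stmt1 (k : ℕ) (σ : Equiv.Perm (Fin k))
    (hσ : ∀ i : Fin k, (σ i : ℕ) ≤ (i : ℕ) + 1) :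
    Equiv.Perm.sign σ =
      (-1) ^ (Finset.univ.filter (fun i : Fin k => (σ i : ℕ) = (i : ℕ) + 1)).card :=
  Equiv.Perm.sign_eq_neg_one_pow_card_nonstandardIndices σ hσ
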